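/- Let T̃ be a cyclic permutation of {1,…,n} and let O(i,j) be the least k ≥ 0 with T̃^k(i) = j. Then s₀ = Σ_{i≠j} (½ − O(i,j)/n) e_{ii}⊗e_{jj} is the unique element of h₀∧h₀ (h₀ the traceless diagonal matrices) satisfying [(e_i − e_{T̃(i)})⊗1] s₀ = ½ [(e_i + e_{T̃(i)})⊗1] (pr⊗pr)P⁰ for all 1 ≤ i ≤ n. -/

import Mathlib

open Complex

/-- `Matₙ(ℂ)` -/
abbrev M1 (n : ℕ) := Matrix (Fin n) (Fin n) ℂ
/-- `Matₙ ⊗ Matₙ`, realized as matrices indexed by pairs (Kronecker indexing). -/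
abbrev M2 (n : ℕ) := Matrix (Fin n × Fin n) (Fin n × Fin n) ℂ
/-- `Matₙ ⊗ Matₙ ⊗ Matₙ`. -/
abbrev M3 (n : ℕ) := Matrix (Fin n × Fin n × Fin n) (Fin n × Fin n × Fin n) ℂ

/-- matrix unit `e_{ij}` (ℕ-indexed, zero if out of range) -/
def Eu (n : ℕ) (i j : ℕ) : M1 n := fun a b => if (a : ℕ) = i ∧ (b : ℕ) = j then 1 else 0

/-- Kronecker/tensor product of two matrices: `a ⊗ b`. -/
def tens {n : ℕ} (a b : M1 n) : M2 n := fun p q => a p.1 q.1 * b p.2 q.2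

/-- `x ↦ x^{12}` -/
def emb12 {n : ℕ} (x : M2 n) : M3 n :=
  fun p q => x (p.1, p.2.1) (q.1, q.2.1) * (if p.2.2 = q.2.2 then 1 else 0)
/-- `x ↦ x^{13}` -/
def emb13 {n : ℕ} (x : M2 n) : M3 n :=
  fun p q => x (p.1, p.2.2) (q.1, q.2.2) * (if p.2.1 = q.2.1 then 1 else 0)
/-- `x ↦ x^{23}` -/
def emb23 {n : ℕ} (x : M2 n) : M3 n :=
  fun p q => x (p.2.1, p.2.2) (q.2.1, q.2.2) * (if p.1 = q.1 then 1 else 0)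
/-- `x ↦ x^{21}` (flip of the two tensor factors) -/
def flipT {n : ℕ} (x : M2 n) : M2 n := fun p q => x (p.2, p.1) (q.2, q.1)

/-- The permutation matrix `P = Σ_{i,j} e_{ij} ⊗ e_{ji}`. -/
def Pmat (n : ℕ) : M2 n := fun p q => if p.1 = q.2 ∧ p.2 = q.1 then 1 else 0

/-- Left-hand side of the AYBE with two spectral parameters. -/
noncomputable def aybeLHS {n : ℕ} (r : ℂ → ℂ → M2 n) (u u' v v' : ℂ) : M3 n :=
  emb12 (r (-u') v) * emb13 (r (u + u') (v + v'))
    - emb23 (r (u + u') v') * emb12 (r u v)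
    + emb13 (r u (v + v')) * emb23 (r u' v')

/-- Left-hand side of the CYBE with spectral parameter. -/
noncomputable def cybeLHS {n : ℕ} (f : ℂ → M2 n) (v v' : ℂ) : M3 n :=
  (emb12 (f v) * emb13 (f (v + v')) - emb13 (f (v + v')) * emb12 (f v))
    + (emb12 (f v) * emb23 (f v') - emb23 (f v') * emb12 (f v))
    + (emb13 (f (v + v')) * emb23 (f v') - emb23 (f v') * emb13 (f (v + v')))


/-- a permutation of `Fin n` as a map on `ℕ`. -/
def pv {n : ℕ} (σ : Equiv.Perm (Fin n)) (m : ℕ) : ℕ := if h : m < n then (σ ⟨m, h⟩ : ℕ) else m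

/-- `σ` is a cyclic permutation of `{0,…,n-1}` (a single `n`-cycle). -/
def IsCyclic' {n : ℕ} (σ : Equiv.Perm (Fin n)) : Prop := ∀ i j : Fin n, ∃ k : ℕ, (σ ^ k) i = j

/-- `OO i j` is the least `k ≥ 0` with `T̃^k i = j`. -/
def OSpec {n : ℕ} (σ : Equiv.Perm (Fin n)) (OO : ℕ → ℕ → ℕ) : Prop :=
  ∀ i j : ℕ, i < n → j < n →
    (pv σ)^[OO i j] i = j ∧ ∀ m < OO i j, (pv σ)^[m] i ≠ j

/-- membership of (the coefficient matrix of) `t` in `h₀ ∧ h₀` together with the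
equations `[(e_i - e_{T̃ i}) ⊗ 1] t = ½ [(e_i + e_{T̃ i}) ⊗ 1] (pr⊗pr)P⁰`:
skew-symmetry, vanishing row and column sums (i.e. `t ∈ h₀ ⊗ h₀`), and the contraction
identities. -/
def GoodS0 {n : ℕ} (σ : Equiv.Perm (Fin n)) (t : Fin n → Fin n → ℂ) : Prop :=
  (∀ i k : Fin n, t k i = - t i k) ∧
  (∀ k : Fin n, ∑ i : Fin n, t i k = 0) ∧
  (∀ i : Fin n, ∑ k : Fin n, t i k = 0) ∧
  (∀ i k : Fin n,
    t i k - t (σ i) k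
      = (1 / 2 : ℂ) * (((if i = k then 1 else 0) - 1 / (n : ℂ))
          + ((if σ i = k then 1 else 0) - 1 / (n : ℂ))))


section S0Aux

variable {n : ℕ} {σ : Equiv.Perm (Fin n)} {OO : ℕ → ℕ → ℕ}

lemma pv_iter (σ : Equiv.Perm (Fin n)) (k : ℕ) (i : Fin n) :
    (pv σ)^[k] (i : ℕ) = ((σ ^ k) i : ℕ) := by
  induction k generalizing i with
  | zero => simp
  | succ k ih =>
    rw [Function.iterate_succ_apply]
    have h1 : pv σ (i : ℕ) = ((σ i : Fin n) : ℕ) := by simp [pv]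
    rw [h1, ih (σ i), pow_succ]
    simp [Equiv.Perm.mul_apply]

lemma OO_spec (h : OSpec σ OO) (i j : Fin n) :
    (σ ^ OO (i : ℕ) (j : ℕ)) i = j ∧ ∀ m < OO (i : ℕ) (j : ℕ), (σ ^ m) i ≠ j := by
  obtain ⟨h1, h2⟩ := h i j i.isLt j.isLt
  rw [pv_iter] at h1
  refine ⟨Fin.ext h1, fun m hm hne => h2 m hm ?_⟩
  rw [pv_iter]
  exact congrArg Fin.val hne

lemma OO_le (h : OSpec σ OO) {i j : Fin n} {m : ℕ} (hm : (σ ^ m) i = j) :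
    OO (i : ℕ) (j : ℕ) ≤ m := by
  by_contra hc
  exact (OO_spec h i j).2 m (not_le.mp hc) hm

lemma OO_eq (h : OSpec σ OO) {i j : Fin n} {m : ℕ} (hm : (σ ^ m) i = j)
    (hmin : ∀ m' < m, (σ ^ m') i ≠ j) : OO (i : ℕ) (j : ℕ) = m := by
  have h1 := OO_le h hm
  rcases lt_or_eq_of_le h1 with h2 | h2
  · exact absurd (OO_spec h i j).1 (hmin _ h2)
  · exact h2

lemma OO_self (h : OSpec σ OO) (i : Fin n) : OO (i : ℕ) (i : ℕ) = 0 :=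
  OO_eq h (by simp) (fun m hm => absurd hm (Nat.not_lt_zero m))

lemma OO_pos (h : OSpec σ OO) {i j : Fin n} (hij : i ≠ j) : 0 < OO (i : ℕ) (j : ℕ) := by
  rcases Nat.eq_zero_or_pos (OO (i : ℕ) (j : ℕ)) with h0 | h0
  · have := (OO_spec h i j).1
    rw [h0] at this
    simp at this
    exact absurd this hij
  · exact h0

lemma OO_inj (h : OSpec σ OO) (i : Fin n) :
    Function.Injective (fun j : Fin n => OO (i : ℕ) (j : ℕ)) := by
  intro a b hab
  have ha := (OO_spec h i a).1
  have hb := (OO_spec h i b).1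
  simp only at hab
  rw [← ha, ← hb, hab]

lemma OO_inj1 (h : OSpec σ OO) (k : Fin n) :
    Function.Injective (fun i : Fin n => OO (i : ℕ) (k : ℕ)) := by
  intro a b hab
  have ha := (OO_spec h a k).1
  have hb := (OO_spec h b k).1
  simp only at hab
  rw [hab] at ha
  have := ha.trans hb.symm
  exact (σ ^ OO (b : ℕ) (k : ℕ)).injective this

lemma period_exists (hn : 0 < n) (i : Fin n) :
    ∃ p, 0 < p ∧ p ≤ n ∧ (σ ^ p) i = i := by
  have hcard : Fintype.card (Fin n) < Fintype.card (Fin (n + 1)) := by simp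
  obtain ⟨a, b, hab, heq⟩ :=
    Fintype.exists_ne_map_eq_of_card_lt (fun k : Fin (n + 1) => (σ ^ (k : ℕ)) i) hcard
  have hvne : (a : ℕ) ≠ (b : ℕ) := fun hv => hab (Fin.ext hv)
  have ha' : (a : ℕ) < n + 1 := a.isLt
  have hb' : (b : ℕ) < n + 1 := b.isLt
  have main : ∀ x y : ℕ, x < y → y ≤ n → (σ ^ x) i = (σ ^ y) i →
      ∃ p, 0 < p ∧ p ≤ n ∧ (σ ^ p) i = i := by
    intro x y hxy hyn hxyeq
    refine ⟨y - x, ?_, ?_, ?_⟩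
    · omega
    · omega
    · have hxy2 : x + (y - x) = y := by omega
      have hy : (σ ^ y) i = (σ ^ (x + (y - x))) i := by rw [hxy2]
      rw [hy, pow_add, Equiv.Perm.mul_apply] at hxyeq
      exact ((σ ^ x).injective hxyeq).symm
  rcases lt_or_gt_of_ne hvne with hlt | hlt
  · exact main a b hlt (show (b : ℕ) ≤ n by omega) heq
  · exact main b a hlt (show (a : ℕ) ≤ n by omega) heq.symm

lemma iter_mod {i : Fin n} {p : ℕ} (hp : 0 < p) (hfix : (σ ^ p) i = i) (k : ℕ) :
    (σ ^ k) i = (σ ^ (k % p)) i := by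
  induction k using Nat.strong_induction_on with
  | _ k ih =>
    by_cases hk : k < p
    · rw [Nat.mod_eq_of_lt hk]
    · push_neg at hk
      have h1 : k = (k - p) + p := by omega
      have h2 : (σ ^ k) i = (σ ^ (k - p)) i := by
        conv_lhs => rw [h1]
        rw [pow_add, Equiv.Perm.mul_apply, hfix]
      rw [h2, ih (k - p) (by omega), Nat.mod_eq_sub_mod hk]

lemma n_le_period (hcyc : IsCyclic' σ) (h : OSpec σ OO) {i : Fin n} {p : ℕ}
    (hp : 0 < p) (hfix : (σ ^ p) i = i) : n ≤ p := by
  have hlt : ∀ j : Fin n, OO (i : ℕ) (j : ℕ) < p := by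
    intro j
    obtain ⟨k, hk⟩ := hcyc i j
    have h2 : (σ ^ (k % p)) i = j := by rw [← iter_mod hp hfix k]; exact hk
    exact lt_of_le_of_lt (OO_le h h2) (Nat.mod_lt _ hp)
  have hinjp : Function.Injective (fun j : Fin n => (⟨OO (i : ℕ) (j : ℕ), hlt j⟩ : Fin p)) := by
    intro a b hab
    exact OO_inj h i (congrArg Fin.val hab)
  simpa using Fintype.card_le_of_injective _ hinjp

lemma key_facts (hn : 2 ≤ n) (hcyc : IsCyclic' σ) (h : OSpec σ OO) (i : Fin n) :
    (∀ j : Fin n, OO (i : ℕ) (j : ℕ) < n) ∧ (σ ^ n) i = i ∧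
      (∀ m, 0 < m → m < n → (σ ^ m) i ≠ i) := by
  obtain ⟨p, hp0, hpn, hpfix⟩ := period_exists (by omega) i
  have hpe : p = n := le_antisymm hpn (n_le_period hcyc h hp0 hpfix)
  subst hpe
  refine ⟨?_, hpfix, ?_⟩
  · intro j
    obtain ⟨k, hk⟩ := hcyc i j
    have h2 : (σ ^ (k % p)) i = j := by rw [← iter_mod hp0 hpfix k]; exact hk
    exact lt_of_le_of_lt (OO_le h h2) (Nat.mod_lt _ hp0)
  · intro m hm0 hmp hfix
    exact absurd (n_le_period hcyc h hm0 hfix) (by omega)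

lemma sigma_ne (hn : 2 ≤ n) (hcyc : IsCyclic' σ) (h : OSpec σ OO) (i : Fin n) :
    σ i ≠ i := by
  have := (key_facts hn hcyc h i).2.2 1 one_pos (by omega)
  simpa using this

lemma OO_add (hn : 2 ≤ n) (hcyc : IsCyclic' σ) (h : OSpec σ OO) {i j : Fin n} (hij : i ≠ j) :
    OO (i : ℕ) (j : ℕ) + OO (j : ℕ) (i : ℕ) = n := by
  obtain ⟨hltn, hfix, hmin⟩ := key_facts hn hcyc h i
  set a := OO (i : ℕ) (j : ℕ) with ha
  set b := OO (j : ℕ) (i : ℕ) with hb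
  have h1 : (σ ^ (b + a)) i = i := by
    rw [pow_add, Equiv.Perm.mul_apply, (OO_spec h i j).1, (OO_spec h j i).1]
  have h2 : (σ ^ ((b + a) % n)) i = i := by rw [← iter_mod (by omega) hfix]; exact h1
  have hmod : (b + a) % n = 0 := by
    by_contra hc
    exact hmin _ (Nat.pos_of_ne_zero hc) (Nat.mod_lt _ (by omega)) h2
  obtain ⟨c, hc⟩ := Nat.dvd_of_mod_eq_zero hmod
  have ha0 : 0 < a := OO_pos h hij
  have hb0 : 0 < b := OO_pos h hij.symm
  have haltn : a < n := hltn j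
  have hbltn : b < n := (key_facts hn hcyc h j).1 i
  have hc2 : c < 2 := by
    by_contra hc2
    push_neg at hc2
    have : n * 2 ≤ n * c := Nat.mul_le_mul_left n hc2
    omega
  interval_cases c <;> omega

lemma OO_step (h : OSpec σ OO) {i k : Fin n} (hik : i ≠ k) :
    OO ((σ i : Fin n) : ℕ) (k : ℕ) + 1 = OO (i : ℕ) (k : ℕ) := by
  have ha0 : 0 < OO (i : ℕ) (k : ℕ) := OO_pos h hik
  have heq : OO ((σ i : Fin n) : ℕ) (k : ℕ) = OO (i : ℕ) (k : ℕ) - 1 := by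
    apply OO_eq h
    · have : (σ ^ (OO (i : ℕ) (k : ℕ) - 1 + 1)) i = k := by
        rw [Nat.sub_add_cancel ha0]
        exact (OO_spec h i k).1
      rw [pow_succ, Equiv.Perm.mul_apply] at this
      exact this
    · intro m hm hne
      rw [← Equiv.Perm.mul_apply, ← pow_succ] at hne
      exact (OO_spec h i k).2 (m + 1) (by omega) hne
  omega

lemma OO_sigma_self (hn : 2 ≤ n) (hcyc : IsCyclic' σ) (h : OSpec σ OO) (i : Fin n) :
    OO (i : ℕ) ((σ i : Fin n) : ℕ) = 1 := by
  apply OO_eq h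
  · simp
  · intro m hm
    interval_cases m
    simpa using (sigma_ne hn hcyc h i).symm

lemma OO_sigma_self' (hn : 2 ≤ n) (hcyc : IsCyclic' σ) (h : OSpec σ OO) (i : Fin n) :
    OO ((σ i : Fin n) : ℕ) (i : ℕ) = n - 1 := by
  have := OO_add hn hcyc h (sigma_ne hn hcyc h i)
  have h1 := OO_sigma_self hn hcyc h i
  omega

lemma OO_col_image (hn : 2 ≤ n) (hcyc : IsCyclic' σ) (h : OSpec σ OO) (k : Fin n) :
    Finset.image (fun i : Fin n => OO (i : ℕ) (k : ℕ)) Finset.univ = Finset.range n := by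
  apply Finset.eq_of_subset_of_card_le
  · intro m hm
    simp only [Finset.mem_image, Finset.mem_univ, true_and] at hm
    obtain ⟨i, hi⟩ := hm
    rw [Finset.mem_range, ← hi]
    exact (key_facts hn hcyc h i).1 k
  · rw [Finset.card_range, Finset.card_image_of_injective _ (OO_inj1 h k),
      Finset.card_univ, Fintype.card_fin]

lemma OO_col_sum (hn : 2 ≤ n) (hcyc : IsCyclic' σ) (h : OSpec σ OO) (k : Fin n) :
    (∑ i : Fin n, ((OO (i : ℕ) (k : ℕ) : ℕ) : ℂ)) * 2 = (n : ℂ) * ((n : ℂ) - 1) := by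
  have h1 : ∑ i : Fin n, ((OO (i : ℕ) (k : ℕ) : ℕ) : ℂ)
      = ∑ m ∈ Finset.range n, (m : ℂ) := by
    rw [← OO_col_image hn hcyc h k,
      Finset.sum_image (fun a _ b _ hab => OO_inj1 h k hab)]
  rw [h1]
  have h2 := Finset.sum_range_id_mul_two n
  have h4 := congrArg (fun x : ℕ => (x : ℂ)) h2
  push_cast [Nat.cast_sub (show 1 ≤ n by omega)] at h4
  exact h4

end S0Aux

/-- **Lemma `stptra`.** For a cyclic permutation `T̃` of `{1,…,n}`,
`s₀ = Σ_{i≠j} (½ - O(i,j)/n) e_ii ⊗ e_jj` is the unique element of `h₀ ∧ h₀` satisfying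
`[(e_i - e_{T̃ i}) ⊗ 1] s₀ = ½ [(e_i + e_{T̃ i}) ⊗ 1] (pr⊗pr)P⁰` for all `i`. -/
theorem s0_formula_unique (n : ℕ) (hn : 2 ≤ n)
    (σ : Equiv.Perm (Fin n)) (hcyc : IsCyclic' σ)
    (OO : ℕ → ℕ → ℕ) (hOO : OSpec σ OO)
    (s0 : Fin n → Fin n → ℂ)
    (hs0 : ∀ i k : Fin n,
      s0 i k = if i = k then 0 else 1 / 2 - (OO i k : ℂ) / (n : ℂ)) :
    GoodS0 σ s0 ∧ ∀ t : Fin n → Fin n → ℂ, GoodS0 σ t → t = s0 := by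
  have hn0 : (n : ℂ) ≠ 0 := Nat.cast_ne_zero.mpr (by omega)
  have good1 : ∀ i k : Fin n, s0 k i = - s0 i k := by
    intro i k
    by_cases hik : i = k
    · subst hik
      rw [hs0, if_pos rfl]
      ring
    · rw [hs0, hs0, if_neg (Ne.symm hik), if_neg hik]
      have hadd := OO_add hn hcyc hOO hik
      have hc : (OO (k : ℕ) (i : ℕ) : ℂ) = (n : ℂ) - (OO (i : ℕ) (k : ℕ) : ℂ) := by
        have h := congrArg (fun x : ℕ => (x : ℂ)) hadd
        push_cast at h
        linear_combination h
      rw [hc]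
      field_simp
      ring
  have good2 : ∀ k : Fin n, ∑ i : Fin n, s0 i k = 0 := by
    intro k
    have hterm : ∀ i : Fin n, s0 i k
        = (1 / 2 - (OO (i : ℕ) (k : ℕ) : ℂ) / n) - (if i = k then (1 / 2 : ℂ) else 0) := by
      intro i
      rw [hs0]
      by_cases hik : i = k
      · subst hik
        rw [if_pos rfl, if_pos rfl, OO_self hOO]
        simp
      · rw [if_neg hik, if_neg hik]
        ring
    rw [Finset.sum_congr rfl (fun i _ => hterm i), Finset.sum_sub_distrib,
      Finset.sum_sub_distrib, Finset.sum_const, Finset.card_univ, Fintype.card_fin,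
      ← Finset.sum_div]
    simp only [Finset.sum_ite_eq', Finset.mem_univ, if_true]
    have hS := OO_col_sum hn hcyc hOO k
    rw [nsmul_eq_mul]
    field_simp
    linear_combination -hS
  have good3 : ∀ i : Fin n, ∑ k : Fin n, s0 i k = 0 := by
    intro i
    rw [Finset.sum_congr rfl (fun k _ => good1 k i), Finset.sum_neg_distrib, good2 i, neg_zero]
  have good4 : ∀ i k : Fin n,
      s0 i k - s0 (σ i) k
        = (1 / 2 : ℂ) * (((if i = k then 1 else 0) - 1 / (n : ℂ))
            + ((if σ i = k then 1 else 0) - 1 / (n : ℂ))) := by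
    intro i k
    have hsi : σ i ≠ i := sigma_ne hn hcyc hOO i
    by_cases h1 : i = k
    · subst h1
      rw [hs0, hs0, if_pos rfl, if_pos rfl, if_neg hsi, if_neg hsi,
        OO_sigma_self' hn hcyc hOO i, Nat.cast_sub (by omega : 1 ≤ n), Nat.cast_one]
      field_simp
      ring
    · by_cases h2 : σ i = k
      · subst h2
        rw [hs0, hs0, if_neg h1, if_neg h1, if_pos rfl, if_pos rfl,
          OO_sigma_self hn hcyc hOO i, Nat.cast_one]
        field_simp
        ring
      · have hstep := OO_step hOO h1
        rw [hs0, hs0, if_neg h1, if_neg h1, if_neg h2, if_neg h2]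
        have hc : (OO ((σ i : Fin n) : ℕ) (k : ℕ) : ℂ) = (OO (i : ℕ) (k : ℕ) : ℂ) - 1 := by
          have h := congrArg (fun x : ℕ => (x : ℂ)) hstep
          push_cast at h
          linear_combination h
        rw [hc]
        field_simp
        ring
  refine ⟨⟨good1, good2, good3, good4⟩, ?_⟩
  intro t ht
  obtain ⟨t1, t2, t3, t4⟩ := ht
  have hdiff : ∀ i k : Fin n, t (σ i) k - s0 (σ i) k = t i k - s0 i k := by
    intro i k
    have ha := t4 i k
    have hb := good4 i k
    linear_combination hb - ha
  have hpow : ∀ (m : ℕ) (i k : Fin n),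
      t ((σ ^ m) i) k - s0 ((σ ^ m) i) k = t i k - s0 i k := by
    intro m
    induction m with
    | zero => intro i k; simp
    | succ m ih =>
      intro i k
      rw [pow_succ, Equiv.Perm.mul_apply, ih (σ i) k, hdiff i k]
  have hconst : ∀ i i' k : Fin n, t i' k - s0 i' k = t i k - s0 i k := by
    intro i i' k
    obtain ⟨m, hm⟩ := hcyc i i'
    rw [← hm, hpow]
  funext i k
  have hsum : ∑ i' : Fin n, (t i' k - s0 i' k) = 0 := by
    rw [Finset.sum_sub_distrib, t2 k, good2 k, sub_zero]
  have hsum2 : ∑ i' : Fin n, (t i' k - s0 i' k) = (n : ℂ) * (t i k - s0 i k) := by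
    rw [Finset.sum_congr rfl (fun i' _ => hconst i i' k), Finset.sum_const,
      Finset.card_univ, Fintype.card_fin, nsmul_eq_mul]
  have hz := hsum2.symm.trans hsum
  rcases mul_eq_zero.mp hz with h | h
  · exact absurd h hn0
  · linear_combination h
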